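/- arXiv:math/0610757 — 2 statements merged into one kernel-verified Lean document; each statement's English description precedes it below -/
import Mathlib

section
/- Equation (ec122): fix a subset I ⊆ {1,…,p} and a class index k ∈ {1,…,K}. Suppose (i) max_{1≤j≤n} ‖X*_j − Y_j‖ → 0 almost surely as n → ∞, (ii) Assumption 1b holds for I, and (iii) Assumption 2 holds for I. Then (1/n) · #{ 1 ≤ j ≤ n : f_n(X*_j) = k, f_n(Y_j) ≠ k, f_n(X_j) = k } → 0 almost surely as n → ∞. -/
/-!
A misallocated index `j` has `X*_j` and `Y_j` on opposite sides of `G_k^{(n)}`, so the segment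
between them crosses `∂G_k^{(n)}` and `d(Y_j, ∂G_k^{(n)}) ≤ ‖X*_j − Y_j‖` is uniformly small.
Since `d(·, ∂G)` is 1-Lipschitz, the pointwise convergence of Assumption 1b is uniform on the
totally bounded set of sample points in a ball, so every misallocated `Y_j` eventually lies
`δ`-close to `∂G_k` or outside that ball. By Assumption 2 this region has small probability for
small `δ` and a large ball, and the strong law of large numbers bounds the frequency of sample
points in it.
-/

open MeasureTheory ProbabilityTheory Filter Metric
open scoped Topology ENNReal NNReal

theorem infDist_frontier_le_dist_of_mem_of_notMem {E : Type*} [NormedAddCommGroup E]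
    [NormedSpace ℝ E] {G : Set E} {x y : E} (hx : x ∈ G) (hy : y ∉ G) :
    infDist y (frontier G) ≤ dist x y := by
  obtain ⟨z, hz, hzG, hzGc⟩ := isPreconnected_closed_iff.1
    (convex_segment y x).isPreconnected (closure G) (closure Gᶜ) isClosed_closure
    isClosed_closure (fun w _ => (em (w ∈ G)).imp (subset_closure ·) (subset_closure ·))
    ⟨x, right_mem_segment ℝ y x, subset_closure hx⟩ ⟨y, left_mem_segment ℝ y x, subset_closure hy⟩
  have hzfr : z ∈ frontier G := by
    rw [frontier_eq_closure_inter_closure]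
    exact ⟨hzG, hzGc⟩
  calc infDist y (frontier G) ≤ dist y z := infDist_le_dist_of_mem hzfr
    _ ≤ dist y x := by linarith [dist_add_dist_of_mem_segment hz, dist_nonneg (x := z) (y := x)]
    _ = dist x y := dist_comm y x

theorem TotallyBounded.eventually_forall_dist_lt {α β : Type*} [PseudoMetricSpace α]
    [PseudoMetricSpace β] {S : Set α} (hS : TotallyBounded S) {K : ℝ≥0} {g : ℕ → α → β}
    {h : α → β} (hg : ∀ n, LipschitzWith K (g n)) (hh : LipschitzWith K h)
    (hconv : ∀ y ∈ S, Tendsto (fun n => g n y) atTop (𝓝 (h y))) {ε : ℝ} (hε : 0 < ε) :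
    ∀ᶠ n in atTop, ∀ y ∈ S, dist (g n y) (h y) < ε := by
  set r := ε / (3 * (K + 1))
  have hr : 0 < r := by positivity
  have hKr : K * r < ε / 3 := by
    rw [mul_div_assoc', div_lt_div_iff₀ (by positivity) (by norm_num)]
    nlinarith
  obtain ⟨t, htS, ht, hSt⟩ := finite_approx_of_totallyBounded hS r hr
  have hnet : ∀ᶠ n in atTop, ∀ z ∈ t, dist (g n z) (h z) < ε / 3 :=
    ht.eventually_all.2 fun z hz => tendsto_nhds.1 (hconv z (htS hz)) _ (by positivity)
  filter_upwards [hnet] with n hn y hy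
  obtain ⟨z, hz, hyz⟩ := Set.mem_iUnion₂.1 (hSt hy)
  have hyz : dist y z < r := hyz
  calc dist (g n y) (h y) ≤ dist (g n y) (g n z) + dist (g n z) (h z) + dist (h z) (h y) :=
        dist_triangle4 _ _ _ _
    _ ≤ K * dist y z + dist (g n z) (h z) + K * dist z y := by
        gcongr
        exacts [(hg n).dist_le_mul y z, hh.dist_le_mul z y]
    _ < ε := by
        rw [dist_comm z y]
        nlinarith [hn z hz, mul_le_mul_of_nonneg_left hyz.le K.coe_nonneg]

section Misallocation

variable {E : Type*} [NormedAddCommGroup E] [NormedSpace ℝ E] [ProperSpace E]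

theorem eventually_infDist_frontier_lt_of_mem_of_notMem {y : ℕ → E} {x : ℕ → ℕ → E}
    {G : ℕ → Set E} {G₀ : Set E} (hx : ∀ ε > 0, ∀ᶠ n in atTop, ∀ j < n, ‖x n j - y j‖ < ε)
    (hG : ∀ j, Tendsto (fun n => infDist (y j) (frontier (G n)) -
      infDist (y j) (frontier G₀)) atTop (𝓝 0)) {δ : ℝ} (hδ : 0 < δ) (R : ℝ) :
    ∀ᶠ n in atTop, ∀ j < n, x n j ∈ G n → y j ∉ G n →
      y j ∈ {z | infDist z (frontier G₀) < δ} ∪ (closedBall 0 R)ᶜ := by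
  have hS : TotallyBounded (Set.range y ∩ closedBall 0 R) :=
    (isCompact_closedBall 0 R).totallyBounded.subset Set.inter_subset_right
  have hunif := hS.eventually_forall_dist_lt (fun n => lipschitz_infDist_pt (frontier (G n)))
    (lipschitz_infDist_pt (frontier G₀))
    (by rintro _ ⟨⟨j, rfl⟩, -⟩; exact tendsto_sub_nhds_zero_iff.1 (hG j)) (half_pos hδ)
  filter_upwards [hunif, hx (δ / 2) (half_pos hδ)] with n hunif hx j hj hxG hyG
  rw [Set.mem_union, or_iff_not_imp_right, Set.notMem_compl_iff]
  intro hyR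
  show infDist (y j) (frontier G₀) < δ
  have hcross := infDist_frontier_le_dist_of_mem_of_notMem hxG hyG
  have hclose := hunif (y j) ⟨⟨j, rfl⟩, hyR⟩
  rw [dist_eq_norm] at hcross
  rw [Real.dist_eq] at hclose
  linarith [(abs_sub_lt_iff.1 hclose).2, hx j hj]

end Misallocation

section Probability

variable {Ω E : Type*} [MeasurableSpace Ω] {μ : Measure Ω}

theorem tendsto_measure_lt_atTop [IsFiniteMeasure μ] {g : Ω → ℝ} (hg : Measurable g) :
    Tendsto (fun R : ℝ => μ {ω | R < g ω}) atTop (𝓝 0) := by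
  have hempty : (⋂ R : ℝ, {ω | R < g ω}) = ∅ :=
    Set.eq_empty_of_forall_notMem fun ω hω => lt_irrefl (g ω) (Set.mem_iInter.1 hω (g ω))
  simpa [hempty, Function.comp_def] using tendsto_measure_iInter_atTop (μ := μ)
    (fun R => (measurableSet_lt measurable_const hg).nullMeasurableSet)
    (fun a b hab => Set.ofPred_subset_ofPred.2 fun ω hω => hab.trans_lt hω)
    ⟨0, measure_ne_top μ _⟩

theorem exists_measure_preimage_infDist_lt_union_compl_closedBall_lt [IsFiniteMeasure μ]
    [NormedAddCommGroup E] [MeasurableSpace E] [OpensMeasurableSpace E] {Z : Ω → E}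
    (hZ : Measurable Z) {A : Set E}
    (hA : Tendsto (fun δ : ℝ => μ {ω | infDist (Z ω) A < δ}) (𝓝[>] 0) (𝓝 0)) {ε : ℝ≥0∞}
    (hε : 0 < ε) :
    ∃ δ > 0, ∃ R, μ (Z ⁻¹' ({z | infDist z A < δ} ∪ (closedBall 0 R)ᶜ)) < ε := by
  obtain ⟨δ, hδA, hδ⟩ :=
    ((hA.eventually_lt_const (ENNReal.half_pos hε.ne')).and self_mem_nhdsWithin).exists
  obtain ⟨R, hR⟩ :=
    ((tendsto_measure_lt_atTop (μ := μ) hZ.norm).eventually_lt_const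
      (ENNReal.half_pos hε.ne')).exists
  refine ⟨δ, hδ, R, ?_⟩
  calc μ (Z ⁻¹' ({z | infDist z A < δ} ∪ (closedBall 0 R)ᶜ))
      ≤ μ {ω | infDist (Z ω) A < δ} + μ {ω | R < ‖Z ω‖} := by
        refine (measure_mono fun ω hω => ?_).trans (measure_union_le _ _)
        simpa using hω
    _ < ε / 2 + ε / 2 := ENNReal.add_lt_add hδA hR
    _ = ε := ENNReal.add_halves ε

open Classical in
theorem ae_tendsto_card_filter_mem_div [IsFiniteMeasure μ] [MeasurableSpace E]
    {Z : ℕ → Ω → E} (hindep : Pairwise fun i j => Z i ⟂ᵢ[μ] Z j)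
    (hident : ∀ j, IdentDistrib (Z j) (Z 0) μ μ) {B : Set E} (hB : MeasurableSet B) :
    ∀ᵐ ω ∂μ, Tendsto (fun n : ℕ => (((Finset.range n).filter fun j => Z j ω ∈ B).card : ℝ) / n)
      atTop (𝓝 (μ.real (Z 0 ⁻¹' B))) := by
  have hind : Measurable (B.indicator (1 : E → ℝ)) := measurable_const.indicator hB
  have hZ0 : AEMeasurable (Z 0) μ := (hident 0).aemeasurable_fst
  have hint : Integrable (B.indicator 1 ∘ Z 0) μ :=
    (integrable_map_measure hind.aestronglyMeasurable hZ0).1 ((integrable_const 1).indicator hB)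
  have hmean : μ[B.indicator 1 ∘ Z 0] = μ.real (Z 0 ⁻¹' B) := by
    rw [Function.comp_def, ← integral_map hZ0 hind.aestronglyMeasurable,
      integral_indicator_one hB, measureReal_def, Measure.map_apply_of_aemeasurable hZ0 hB,
      ← measureReal_def]
  filter_upwards [strong_law_ae_real (fun j => B.indicator 1 ∘ Z j) hint
    (fun i j hij => (hindep hij).comp hind hind) (fun j => (hident j).comp hind)] with ω hω
  rw [← hmean]
  refine hω.congr fun n => ?_
  simp [Set.indicator_apply, Finset.sum_boole]

theorem ae_tendsto_zero_of_forall_ae_eventually_lt {a : ℕ → Ω → ℝ} (ha : ∀ n ω, 0 ≤ a n ω)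
    (h : ∀ ε > 0, ∀ᵐ ω ∂μ, ∀ᶠ n in atTop, a n ω < ε) :
    ∀ᵐ ω ∂μ, Tendsto (a · ω) atTop (𝓝 0) := by
  filter_upwards [ae_all_iff.2 fun m : ℕ => h (1 / (m + 1)) Nat.one_div_pos_of_nat] with ω hω
  refine tendsto_order.2 ⟨fun b hb => .of_forall fun n => hb.trans_le (ha n ω), fun b hb => ?_⟩
  obtain ⟨m, hm⟩ := exists_nat_one_div_lt hb
  exact (hω m).mono fun n hn => hn.trans hm

end Probability

theorem ec122_general
    {Ω : Type*} [MeasurableSpace Ω] (μ : Measure Ω) [IsProbabilityMeasure μ]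
    (p K : ℕ)
    -- the i.i.d. sample, with distribution that of `X 0`
    (X : ℕ → Ω → EuclideanSpace ℝ (Fin p))
    (hXmeas : ∀ j, Measurable (X j))
    (hXindep : iIndepFun X μ)
    (hXident : ∀ j, Measure.map (X j) μ = Measure.map (X 0) μ)
    -- population and empirical allocation functions
    (f : EuclideanSpace ℝ (Fin p) → Fin K)
    (fn : ℕ → Ω → EuclideanSpace ℝ (Fin p) → Fin K)
    -- the fixed subset of indices and the fixed class
    (I : Finset (Fin p)) (k : Fin K)
    -- population mean-blinded vectors
    (Y : ℕ → Ω → EuclideanSpace ℝ (Fin p))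
    (hY : ∀ j ω i, Y j ω i = if i ∈ I then X j ω i else ∫ ω', X 0 ω' i ∂μ)
    -- empirical mean-blinded vectors
    (Xs : ℕ → ℕ → Ω → EuclideanSpace ℝ (Fin p))
    -- (i): max_{1 ≤ j ≤ n} ‖X*_j − Y_j‖ → 0 almost surely
    (hmax : ∀ᵐ ω ∂μ, ∀ ε : ℝ, 0 < ε → ∀ᶠ n : ℕ in atTop,
      ∀ j < n, ‖Xs n j ω - Y j ω‖ < ε)
    -- (ii) Assumption 1b for I
    (assump1b : ∀ k' : Fin K, ∀ᵐ ω ∂μ,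
      ∀ j : ℕ, Tendsto
        (fun n => infDist (Y j ω) (frontier ((fn n ω) ⁻¹' {k'})) -
          infDist (Y j ω) (frontier (f ⁻¹' {k'}))) atTop (𝓝 0))
    -- (iii) Assumption 2 for I
    (assump2 : ∀ k' : Fin K,
      Tendsto (fun δ : ℝ => μ {ω | infDist (Y 0 ω) (frontier (f ⁻¹' {k'})) < δ})
        (𝓝[>] 0) (𝓝 0)) :
    ∀ᵐ ω ∂μ,
      Tendsto (fun n : ℕ =>
          (((Finset.range n).filter (fun j => fn n ω (Xs n j ω) = k ∧
            fn n ω (Y j ω) ≠ k ∧ fn n ω (X j ω) = k)).card : ℝ) / (n : ℝ))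
        atTop (𝓝 0) := by
  set φ : EuclideanSpace ℝ (Fin p) → EuclideanSpace ℝ (Fin p) :=
    fun x => WithLp.toLp 2 fun i => if i ∈ I then x i else ∫ ω', X 0 ω' i ∂μ
  have hφ : Measurable φ :=
    (WithLp.measurable_toLp 2 _).comp (measurable_pi_lambda _ fun i => by split_ifs <;> fun_prop)
  have hYφ : ∀ j, Y j = φ ∘ X j := fun j => funext fun ω => by ext i; exact hY j ω i
  have hYindep : Pairwise fun i j => Y i ⟂ᵢ[μ] Y j := fun i j hij => by
    simpa only [hYφ] using (hXindep.indepFun hij).comp hφ hφ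
  have hYident : ∀ j, IdentDistrib (Y j) (Y 0) μ μ := fun j => by
    simpa only [hYφ] using
      (IdentDistrib.mk (hXmeas j).aemeasurable (hXmeas 0).aemeasurable (hXident j)).comp hφ
  refine ae_tendsto_zero_of_forall_ae_eventually_lt (fun n ω => by positivity) fun ε hε => ?_
  obtain ⟨δ, hδ, R, hB⟩ := exists_measure_preimage_infDist_lt_union_compl_closedBall_lt
    (hYφ 0 ▸ hφ.comp (hXmeas 0)) (assump2 k) (ENNReal.ofReal_pos.2 hε)
  have hBmeas : MeasurableSet
      ({z | infDist z (frontier (f ⁻¹' {k})) < δ} ∪ (closedBall 0 R)ᶜ) :=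
    (measurableSet_lt (by fun_prop) measurable_const).union measurableSet_closedBall.compl
  filter_upwards [hmax, assump1b k, ae_tendsto_card_filter_mem_div hYindep hYident hBmeas]
    with ω hmax h1b hfreq
  filter_upwards [eventually_infDist_frontier_lt_of_mem_of_notMem hmax h1b hδ R,
    hfreq.eventually_lt_const (ENNReal.toReal_lt_of_lt_ofReal hB)] with n hbad hlt
  refine lt_of_le_of_lt (div_le_div_of_nonneg_right ?_ n.cast_nonneg) hlt
  refine Nat.cast_le.2 (Finset.card_le_card fun j hj => ?_)
  simp only [Finset.mem_filter, Finset.mem_range] at hj ⊢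
  exact ⟨hj.1, hbad j hj.1 hj.2.1 hj.2.2.1⟩

/-- **Equation (ec122).** Fix a subset `I` of `{1,…,p}` and a class `k`.
If (i) `max_{1≤j≤n} ‖X*_j − Y_j‖ → 0` a.s., (ii) Assumption 1b holds for `I`,
and (iii) Assumption 2 holds for `I`, then the proportion of indices `j ≤ n`
with `f_n(X*_j) = k`, `f_n(Y_j) ≠ k` and `f_n(X_j) = k` tends to `0` a.s. -/
theorem ec122
    {Ω : Type*} [MeasurableSpace Ω] (μ : Measure Ω) [IsProbabilityMeasure μ]
    (p K : ℕ) (hp : 1 ≤ p) (hK : 1 ≤ K)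
    -- the i.i.d. sample, with distribution that of `X 0`
    (X : ℕ → Ω → EuclideanSpace ℝ (Fin p))
    (hXmeas : ∀ j, Measurable (X j))
    (hXindep : iIndepFun X μ)
    (hXident : ∀ j, Measure.map (X j) μ = Measure.map (X 0) μ)
    (hXint : ∀ i : Fin p, Integrable (fun ω => X 0 ω i) μ)
    -- population and empirical allocation functions
    (f : EuclideanSpace ℝ (Fin p) → Fin K) (hf : Measurable f)
    (fn : ℕ → Ω → EuclideanSpace ℝ (Fin p) → Fin K)
    (hfn : ∀ n ω, Measurable (fn n ω))
    -- the fixed subset of indices and the fixed class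
    (I : Finset (Fin p)) (k : Fin K)
    -- population mean-blinded vectors
    (Y : ℕ → Ω → EuclideanSpace ℝ (Fin p))
    (hY : ∀ j ω i, Y j ω i = if i ∈ I then X j ω i else ∫ ω', X 0 ω' i ∂μ)
    -- empirical mean-blinded vectors
    (Xs : ℕ → ℕ → Ω → EuclideanSpace ℝ (Fin p))
    (hXs : ∀ n j ω i, Xs n j ω i =
      if i ∈ I then X j ω i else (∑ m ∈ Finset.range n, X m ω i) / (n : ℝ))
    -- (i): max_{1 ≤ j ≤ n} ‖X*_j − Y_j‖ → 0 almost surely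
    (hmax : ∀ᵐ ω ∂μ, ∀ ε : ℝ, 0 < ε → ∀ᶠ n : ℕ in atTop,
      ∀ j < n, ‖Xs n j ω - Y j ω‖ < ε)
    -- (ii) Assumption 1b for I
    (assump1b : ∀ k' : Fin K, ∀ᵐ ω ∂μ,
      ∀ j : ℕ, Tendsto
        (fun n => infDist (Y j ω) (frontier ((fn n ω) ⁻¹' {k'})) -
          infDist (Y j ω) (frontier (f ⁻¹' {k'}))) atTop (𝓝 0))
    -- (iii) Assumption 2 for I
    (assump2 : ∀ k' : Fin K,
      Tendsto (fun δ : ℝ => μ {ω | infDist (Y 0 ω) (frontier (f ⁻¹' {k'})) < δ})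
        (𝓝[>] 0) (𝓝 0)) :
    ∀ᵐ ω ∂μ,
      Tendsto (fun n : ℕ =>
          (((Finset.range n).filter (fun j => fn n ω (Xs n j ω) = k ∧
            fn n ω (Y j ω) ≠ k ∧ fn n ω (X j ω) = k)).card : ℝ) / (n : ℝ))
        atTop (𝓝 0) :=
  ec122_general μ p K X hXmeas hXindep hXident f fn I k Y hY Xs hmax assump1b assump2
end

section
/- Equation (ec12): fix a subset I ⊆ {1,…,p} and suppose (i) max_{1≤j≤n} ‖X*_j − Y_j‖ → 0 almost surely as n → ∞, (ii) Assumption 1b holds for I, and (iii) Assumption 2 holds for I. Then for each k ∈ {1,…,K}, (1/n) Σ_{j=1}^n 1{f_n(X_j)=k} · ( 1{f_n(X*_j)=k} − 1{f_n(Y_j)=k} ) → 0 almost surely as n → ∞. -/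
open MeasureTheory ProbabilityTheory Filter Metric
open scoped Topology ENNReal

/-!
A term of the average is nonzero only if `X*_j` and `Y_j` lie on different sides of
`G_k^{(n)}`; the closed ball around `Y_j` through `X*_j` is connected, hence meets
`∂G_k^{(n)}`, so `d(Y_j, ∂G_k^{(n)}) ≤ ‖X*_j − Y_j‖`, which by (i) is small uniformly in `j < n`.
The maps `d(·, ∂G_k^{(n)})` are 1-Lipschitz, so the convergence of Assumption 1b at the
sample points is uniform over the sample points lying in a compact ball `B_R`. Hence for large
`n` every such `j` has `Y_j ∉ B_R` or `d(Y_j, ∂G_k) < δ`. By the strong law of large numbers the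
proportion of these `j` tends to `P(Y ∉ B_R or d(Y, ∂G_k) < δ)`, which tightness and
Assumption 2 make arbitrarily small.
-/

theorem IsPreconnected.inter_frontier_nonempty {X : Type*} [TopologicalSpace X] {s t : Set X}
    (hs : IsPreconnected s) (hst : (s ∩ t).Nonempty) (hst' : (s \ t).Nonempty) :
    (s ∩ frontier t).Nonempty := by
  by_contra h
  have hcover : s ⊆ interior t ∪ interior tᶜ := by
    intro z hz
    by_contra hz'
    rw [Set.mem_union, interior_compl, Set.mem_compl_iff, not_or, not_not] at hz'
    exact h ⟨z, hz, hz'.2, hz'.1⟩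
  rcases hs.subset_or_subset isOpen_interior isOpen_interior
      (disjoint_compl_right.mono interior_subset interior_subset) hcover with hsub | hsub
  · obtain ⟨z, hzs, hzt⟩ := hst'
    exact hzt (interior_subset (hsub hzs))
  · obtain ⟨z, hzs, hzt⟩ := hst
    exact interior_subset (hsub hzs) hzt

theorem infDist_frontier_le_dist {E : Type*} [NormedAddCommGroup E]
    [NormedSpace ℝ E] {s : Set E} {x y : E} (h : ¬(x ∈ s ↔ y ∈ s)) :
    infDist x (frontier s) ≤ dist x y := by
  have hx : x ∈ closedBall x (dist x y) := mem_closedBall_self dist_nonneg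
  have hy : y ∈ closedBall x (dist x y) := mem_closedBall'.2 le_rfl
  have hsep :
      (closedBall x (dist x y) ∩ s).Nonempty ∧ (closedBall x (dist x y) \ s).Nonempty := by
    by_cases hxs : x ∈ s
    · exact ⟨⟨x, hx, hxs⟩, ⟨y, hy, fun hys => h (iff_of_true hxs hys)⟩⟩
    · exact ⟨⟨y, hy, by tauto⟩, ⟨x, hx, hxs⟩⟩
  obtain ⟨z, hz, hzs⟩ :=
    (convex_closedBall x (dist x y)).isPreconnected.inter_frontier_nonempty hsep.1 hsep.2
  exact (infDist_le_dist_of_mem hzs).trans (mem_closedBall'.1 hz)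

theorem UniformEquicontinuous.tendstoUniformlyOn_inter_of_tendsto {ι E β : Type*}
    [PseudoMetricSpace E] [PseudoMetricSpace β] {l : Filter ι} {F : ι → E → β} {f : E → β}
    (hF : UniformEquicontinuous F) (hf : UniformContinuous f) {S K : Set E} (hK : IsCompact K)
    (hS : ∀ x ∈ S, Tendsto (F · x) l (𝓝 (f x))) : TendstoUniformlyOn F f l (S ∩ K) := by
  rw [Metric.tendstoUniformlyOn_iff]
  intro ε hε
  obtain ⟨r₁, hr₁, hFr⟩ := Metric.uniformEquicontinuous_iff.1 hF (ε / 3) (by positivity)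
  obtain ⟨r₂, hr₂, hfr⟩ := Metric.uniformContinuous_iff.1 hf (ε / 3) (by positivity)
  obtain ⟨t, -, ht, hKt⟩ := hK.finite_cover_balls (e := min r₁ r₂ / 2) (by positivity)
  have hball : ∀ x ∈ t, ∀ᶠ i in l, ∀ z ∈ S ∩ ball x (min r₁ r₂ / 2), dist (f z) (F i z) < ε := by
    intro x _
    by_cases hx : (S ∩ ball x (min r₁ r₂ / 2)).Nonempty
    · obtain ⟨s, hsS, hsx⟩ := hx
      filter_upwards [Metric.tendsto_nhds.1 (hS s hsS) (ε / 3) (by positivity)] with i hi z hz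
      have hzs : dist z s < min r₁ r₂ := by
        linarith [dist_triangle_right z s x, mem_ball.1 hz.2, mem_ball.1 hsx]
      calc dist (f z) (F i z) ≤ dist (f z) (f s) + dist (f s) (F i s) + dist (F i s) (F i z) :=
            dist_triangle4 _ _ _ _
        _ < ε / 3 + ε / 3 + ε / 3 := by
            gcongr
            · exact hfr (hzs.trans_le (min_le_right _ _))
            · rw [dist_comm]; exact hi
            · rw [dist_comm]; exact hFr z s (hzs.trans_le (min_le_left _ _)) i
        _ = ε := by ring
    · exact Eventually.of_forall fun i z hz => (hx ⟨z, hz⟩).elim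
  filter_upwards [(ht.eventually_all).2 hball] with i hi z ⟨hzS, hzK⟩
  obtain ⟨x, hx, hzx⟩ := Set.mem_iUnion₂.1 (hKt hzK)
  exact hi x hx z ⟨hzS, hzx⟩

def exceptionalSet {E : Type*} [NormedAddCommGroup E] (F : Set E) (R δ : ℝ) : Set E :=
  (closedBall 0 R)ᶜ ∪ {y | infDist y F < δ}

theorem measurableSet_exceptionalSet {E : Type*} [NormedAddCommGroup E] [MeasurableSpace E]
    [OpensMeasurableSpace E] (F : Set E) (R δ : ℝ) : MeasurableSet (exceptionalSet F R δ) :=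
  measurableSet_closedBall.compl.union
    (isOpen_lt (continuous_infDist_pt F) continuous_const).measurableSet

theorem exists_measureReal_exceptionalSet_lt {Ω E : Type*} [MeasurableSpace Ω] {μ : Measure Ω}
    [IsFiniteMeasure μ] [NormedAddCommGroup E] [ProperSpace E] [MeasurableSpace E] [BorelSpace E]
    {Z : Ω → E} (hZ : Measurable Z) {F : Set E}
    (hF : Tendsto (fun δ : ℝ => μ {ω | infDist (Z ω) F < δ}) (𝓝[>] 0) (𝓝 0))
    {ε : ℝ} (hε : 0 < ε) : ∃ δ > 0, ∃ R, μ.real (Z ⁻¹' exceptionalSet F R δ) < ε := by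
  have hF' : Tendsto (fun δ : ℝ => μ.real {ω | infDist (Z ω) F < δ}) (𝓝[>] 0) (𝓝 0) :=
    (ENNReal.tendsto_toReal ENNReal.zero_ne_top).comp hF
  obtain ⟨δ, hδε, hδ⟩ :=
    ((hF'.eventually_lt_const (half_pos hε)).and self_mem_nhdsWithin).exists
  have hR : Tendsto (fun R : ℝ => μ.real (Z ⁻¹' (closedBall 0 R)ᶜ)) atTop (𝓝 0) := by
    have := tendsto_measure_compl_closedBall_of_isTightMeasureSet
      (isTightMeasureSet_singleton (μ := μ.map Z)) (0 : E)
    simp only [Set.mem_singleton_iff, iSup_iSup_eq_left,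
      Measure.map_apply hZ measurableSet_closedBall.compl] at this
    exact (ENNReal.tendsto_toReal ENNReal.zero_ne_top).comp this
  obtain ⟨R, hRε⟩ := (hR.eventually_lt_const (half_pos hε)).exists
  refine ⟨δ, hδ, R, ?_⟩
  calc μ.real (Z ⁻¹' exceptionalSet F R δ)
      ≤ μ.real (Z ⁻¹' (closedBall 0 R)ᶜ) + μ.real {ω | infDist (Z ω) F < δ} :=
        measureReal_union_le _ _
    _ < ε := by linarith

theorem ae_tendsto_average_indicator {Ω E : Type*} [MeasurableSpace Ω] [MeasurableSpace E]
    {μ : Measure Ω} [IsFiniteMeasure μ] {X : ℕ → Ω → E}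
    (hindep : Pairwise fun i j => IndepFun (X i) (X j) μ)
    (hident : ∀ j, IdentDistrib (X j) (X 0) μ μ) {A : Set E} (hA : MeasurableSet A) :
    ∀ᵐ ω ∂μ, Tendsto (fun n : ℕ => (∑ j ∈ Finset.range n, A.indicator 1 (X j ω)) / (n : ℝ)) atTop
      (𝓝 (μ.real (X 0 ⁻¹' A))) := by
  have hmeas : Measurable (A.indicator (1 : E → ℝ)) := measurable_one.indicator hA
  have hX0 : AEMeasurable (X 0) μ := (hident 0).aemeasurable_fst
  have hint : Integrable (A.indicator 1 ∘ X 0) μ :=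
    ((integrable_const (1 : ℝ)).indicator hA).comp_aemeasurable hX0
  have hmean : μ[A.indicator 1 ∘ X 0] = μ.real (X 0 ⁻¹' A) := by
    rw [Function.comp_def, ← integral_map hX0 hmeas.aestronglyMeasurable,
      integral_indicator_one hA, measureReal_def, Measure.map_apply_of_aemeasurable hX0 hA,
      measureReal_def]
  have := strong_law_ae_real (fun j => A.indicator 1 ∘ X j) hint
    (fun i j hij => (hindep hij).comp hmeas hmeas) (fun j => (hident j).comp hmeas)
  rwa [hmean] at this

theorem tendsto_average_of_forall_exists_abs_le {u : ℕ → ℕ → ℝ}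
    (h : ∀ ε > 0, ∃ v : ℕ → ℝ, ∃ c < ε, (∀ᶠ n in atTop, ∀ j < n, |u n j| ≤ v j) ∧
      Tendsto (fun n : ℕ => (∑ j ∈ Finset.range n, v j) / n) atTop (𝓝 c)) :
    Tendsto (fun n : ℕ => (1 / (n : ℝ)) * ∑ j ∈ Finset.range n, u n j) atTop (𝓝 0) := by
  rw [NormedAddGroup.tendsto_nhds_zero]
  intro ε hε
  obtain ⟨v, c, hcε, hle, hv⟩ := h ε hε
  filter_upwards [hle, hv.eventually_lt_const hcε] with n hn hvn
  calc ‖(1 / (n : ℝ)) * ∑ j ∈ Finset.range n, u n j‖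
      = |∑ j ∈ Finset.range n, u n j| / n := by
        rw [Real.norm_eq_abs, abs_mul, abs_of_nonneg (by positivity), one_div_mul_eq_div]
    _ ≤ (∑ j ∈ Finset.range n, v j) / n := by
        gcongr
        exact (Finset.abs_sum_le_sum_abs _ _).trans
          (Finset.sum_le_sum fun j hj => hn j (Finset.mem_range.1 hj))
    _ < ε := hvn

theorem abs_ite_mul_sub_ite_le_indicator {α : Type*} {a b c : Prop} [Decidable a] [Decidable b]
    [Decidable c] {s : Set α} {y : α} (h : (b ↔ c) ∨ y ∈ s) :
    |(if a then (1 : ℝ) else 0) * ((if b then 1 else 0) - (if c then 1 else 0))| ≤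
      s.indicator 1 y := by
  rcases h with h | h
  · simp only [h, sub_self, mul_zero, abs_zero]
    exact Set.indicator_nonneg (fun _ _ => zero_le_one) y
  · rw [Set.indicator_of_mem h]
    split_ifs <;> norm_num

theorem eventually_mem_iff_or_mem_exceptionalSet {E : Type*} [NormedAddCommGroup E]
    [NormedSpace ℝ E] [ProperSpace E] {y : ℕ → E} {x : ℕ → ℕ → E} {G : ℕ → Set E} {F : Set E}
    (hxy : ∀ ε > 0, ∀ᶠ n in atTop, ∀ j < n, ‖x n j - y j‖ < ε)
    (hG : ∀ j, Tendsto (fun n => infDist (y j) (frontier (G n)) - infDist (y j) F) atTop (𝓝 0))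
    {δ : ℝ} (hδ : 0 < δ) (R : ℝ) :
    ∀ᶠ n in atTop, ∀ j < n, (x n j ∈ G n ↔ y j ∈ G n) ∨ y j ∈ exceptionalSet F R δ := by
  have hunif : TendstoUniformlyOn (fun n z => infDist z (frontier (G n))) (infDist · F) atTop
      (Set.range y ∩ closedBall 0 R) :=
    (LipschitzWith.uniformEquicontinuous _ 1 fun n => lipschitz_infDist_pt _)
      |>.tendstoUniformlyOn_inter_of_tendsto (lipschitz_infDist_pt F).uniformContinuous
        (isCompact_closedBall 0 R)
        (by rintro _ ⟨j, rfl⟩; exact tendsto_sub_nhds_zero_iff.1 (hG j))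
  filter_upwards [Metric.tendstoUniformlyOn_iff.1 hunif (δ / 2) (half_pos hδ),
    hxy (δ / 2) (half_pos hδ)] with n hFn hxyn j hj
  rw [or_iff_not_imp_left]
  intro hcross
  have hnear : infDist (y j) (frontier (G n)) < δ / 2 := by
    calc infDist (y j) (frontier (G n)) ≤ dist (y j) (x n j) :=
          infDist_frontier_le_dist fun h => hcross h.symm
      _ < δ / 2 := by rw [dist_comm, dist_eq_norm]; exact hxyn j hj
  by_cases hR : y j ∈ closedBall 0 R
  · right
    have := hFn (y j) ⟨⟨j, rfl⟩, hR⟩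
    rw [Real.dist_eq, abs_lt] at this
    show infDist (y j) F < δ
    linarith
  · exact Or.inl hR

def meanBlind {p : ℕ} (I : Finset (Fin p)) (c : Fin p → ℝ) (x : EuclideanSpace ℝ (Fin p)) :
    EuclideanSpace ℝ (Fin p) :=
  WithLp.toLp 2 (I.piecewise x c)

theorem measurable_meanBlind {p : ℕ} (I : Finset (Fin p)) (c : Fin p → ℝ) :
    Measurable (meanBlind I c) := by
  refine (WithLp.measurable_toLp 2 _).comp (measurable_pi_lambda _ fun i => ?_)
  by_cases hi : i ∈ I <;> simp only [Finset.piecewise, hi, if_true, if_false] <;> fun_prop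

theorem ec12_general
    {Ω : Type*} [MeasurableSpace Ω] (μ : Measure Ω) [IsProbabilityMeasure μ]
    (p K : ℕ)
    -- the i.i.d. sample, with distribution that of `X 0`
    (X : ℕ → Ω → EuclideanSpace ℝ (Fin p))
    (hXmeas : ∀ j, Measurable (X j))
    (hXindep : iIndepFun X μ)
    (hXident : ∀ j, Measure.map (X j) μ = Measure.map (X 0) μ)
    -- population and empirical allocation functions
    (f : EuclideanSpace ℝ (Fin p) → Fin K)
    (fn : ℕ → Ω → EuclideanSpace ℝ (Fin p) → Fin K)
    -- the fixed subset of indices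
    (I : Finset (Fin p))
    -- population mean-blinded vectors
    (Y : ℕ → Ω → EuclideanSpace ℝ (Fin p))
    (hY : ∀ j ω i, Y j ω i = if i ∈ I then X j ω i else ∫ ω', X 0 ω' i ∂μ)
    -- empirical mean-blinded vectors
    (Xs : ℕ → ℕ → Ω → EuclideanSpace ℝ (Fin p))
    -- (i): max_{1 ≤ j ≤ n} ‖X*_j − Y_j‖ → 0 almost surely
    (hmax : ∀ᵐ ω ∂μ, ∀ ε : ℝ, 0 < ε → ∀ᶠ n : ℕ in atTop,
      ∀ j < n, ‖Xs n j ω - Y j ω‖ < ε)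
    -- (ii) Assumption 1b for I
    (assump1b : ∀ k' : Fin K, ∀ᵐ ω ∂μ,
      ∀ j : ℕ, Tendsto
        (fun n => infDist (Y j ω) (frontier ((fn n ω) ⁻¹' {k'})) -
          infDist (Y j ω) (frontier (f ⁻¹' {k'}))) atTop (𝓝 0))
    -- (iii) Assumption 2 for I
    (assump2 : ∀ k' : Fin K,
      Tendsto (fun δ : ℝ => μ {ω | infDist (Y 0 ω) (frontier (f ⁻¹' {k'})) < δ})
        (𝓝[>] 0) (𝓝 0)) :
    ∀ k : Fin K, ∀ᵐ ω ∂μ,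
      Tendsto (fun n : ℕ => (1 / (n : ℝ)) * ∑ j ∈ Finset.range n,
          (if fn n ω (X j ω) = k then (1 : ℝ) else 0) *
          ((if fn n ω (Xs n j ω) = k then (1 : ℝ) else 0) -
            (if fn n ω (Y j ω) = k then (1 : ℝ) else 0)))
        atTop (𝓝 0) := by
  intro k
  set b := meanBlind I fun i => ∫ ω', X 0 ω' i ∂μ
  have hb : Measurable b := measurable_meanBlind _ _
  have hYX : ∀ j, Y j = b ∘ X j := fun j => funext fun ω => by
    ext i
    simp only [hY, Function.comp_apply, b, meanBlind, Finset.piecewise]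
  have hYindep : Pairwise fun i j => IndepFun (Y i) (Y j) μ := fun i j hij => by
    simp only [hYX]
    exact (hXindep.indepFun hij).comp hb hb
  have hYident : ∀ j, IdentDistrib (Y j) (Y 0) μ μ := fun j => by
    simp only [hYX]
    exact IdentDistrib.comp ⟨(hXmeas j).aemeasurable, (hXmeas 0).aemeasurable, hXident j⟩ hb
  choose δ hδ R hR using fun m : ℕ => exists_measureReal_exceptionalSet_lt
    (hYX 0 ▸ hb.comp (hXmeas 0)) (assump2 k) (Nat.one_div_pos_of_nat (n := m))
  have hlaw := ae_all_iff.2 fun m => ae_tendsto_average_indicator hYindep hYident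
    (measurableSet_exceptionalSet (frontier (f ⁻¹' {k})) (R m) (δ m))
  filter_upwards [hmax, assump1b k, hlaw] with ω hXsY hfrontier hω
  refine tendsto_average_of_forall_exists_abs_le fun ε hε => ?_
  obtain ⟨m, hm⟩ := exists_nat_one_div_lt hε
  refine ⟨_, _, (hR m).trans hm, ?_, hω m⟩
  filter_upwards [eventually_mem_iff_or_mem_exceptionalSet hXsY hfrontier (hδ m) (R m)]
    with n hn j hj
  exact abs_ite_mul_sub_ite_le_indicator (hn j hj)

/-- **Equation (ec12).** Fix a subset `I` of `{1,…,p}`.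
If (i) `max_{1≤j≤n} ‖X*_j − Y_j‖ → 0` a.s., (ii) Assumption 1b holds for `I`,
and (iii) Assumption 2 holds for `I`, then for each class `k`,
`(1/n) Σ_{j=1}^n 1{f_n(X_j)=k}·(1{f_n(X*_j)=k} − 1{f_n(Y_j)=k}) → 0` a.s. -/
theorem ec12
    {Ω : Type*} [MeasurableSpace Ω] (μ : Measure Ω) [IsProbabilityMeasure μ]
    (p K : ℕ) (hp : 1 ≤ p) (hK : 1 ≤ K)
    -- the i.i.d. sample, with distribution that of `X 0`
    (X : ℕ → Ω → EuclideanSpace ℝ (Fin p))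
    (hXmeas : ∀ j, Measurable (X j))
    (hXindep : iIndepFun X μ)
    (hXident : ∀ j, Measure.map (X j) μ = Measure.map (X 0) μ)
    (hXint : ∀ i : Fin p, Integrable (fun ω => X 0 ω i) μ)
    -- population and empirical allocation functions
    (f : EuclideanSpace ℝ (Fin p) → Fin K) (hf : Measurable f)
    (fn : ℕ → Ω → EuclideanSpace ℝ (Fin p) → Fin K)
    (hfn : ∀ n ω, Measurable (fn n ω))
    -- the fixed subset of indices
    (I : Finset (Fin p))
    -- population mean-blinded vectors
    (Y : ℕ → Ω → EuclideanSpace ℝ (Fin p))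
    (hY : ∀ j ω i, Y j ω i = if i ∈ I then X j ω i else ∫ ω', X 0 ω' i ∂μ)
    -- empirical mean-blinded vectors
    (Xs : ℕ → ℕ → Ω → EuclideanSpace ℝ (Fin p))
    (hXs : ∀ n j ω i, Xs n j ω i =
      if i ∈ I then X j ω i else (∑ m ∈ Finset.range n, X m ω i) / (n : ℝ))
    -- (i): max_{1 ≤ j ≤ n} ‖X*_j − Y_j‖ → 0 almost surely
    (hmax : ∀ᵐ ω ∂μ, ∀ ε : ℝ, 0 < ε → ∀ᶠ n : ℕ in atTop,
      ∀ j < n, ‖Xs n j ω - Y j ω‖ < ε)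
    -- (ii) Assumption 1b for I
    (assump1b : ∀ k' : Fin K, ∀ᵐ ω ∂μ,
      ∀ j : ℕ, Tendsto
        (fun n => infDist (Y j ω) (frontier ((fn n ω) ⁻¹' {k'})) -
          infDist (Y j ω) (frontier (f ⁻¹' {k'}))) atTop (𝓝 0))
    -- (iii) Assumption 2 for I
    (assump2 : ∀ k' : Fin K,
      Tendsto (fun δ : ℝ => μ {ω | infDist (Y 0 ω) (frontier (f ⁻¹' {k'})) < δ})
        (𝓝[>] 0) (𝓝 0)) :
    ∀ k : Fin K, ∀ᵐ ω ∂μ,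
      Tendsto (fun n : ℕ => (1 / (n : ℝ)) * ∑ j ∈ Finset.range n,
          (if fn n ω (X j ω) = k then (1 : ℝ) else 0) *
          ((if fn n ω (Xs n j ω) = k then (1 : ℝ) else 0) -
            (if fn n ω (Y j ω) = k then (1 : ℝ) else 0)))
        atTop (𝓝 0) :=
  ec12_general μ p K X hXmeas hXindep hXident f fn I Y hY Xs hmax assump1b assump2
end
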